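/- Let f: ℝ^d → ℝ be L-smooth and u ∈ {−1,1}^d be a uniformly random Rademacher vector. The two-point estimator ĝ = (1/μ)[f(x + μu) − f(x)] u satisfies E_u[‖ĝ‖²] ≤ 2d ‖∇f(x)‖² + μ² L² d³ / 2. -/

import Mathlib

/-!
Put `Δ = f (x + μ • u) - f x`. The descent lemma bounds the error of the first-order
approximation, `|Δ - μ ⟪∇f x, u⟫| ≤ L μ² ‖u‖² / 2`, hence
`Δ² ≤ 2 μ² ⟪∇f x, u⟫² + L² μ⁴ ‖u‖⁴ / 2`. A sign vector has `‖u‖² = d`, and sign vectors are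
isotropic: averaged over the cube, `⟪a, u⟫²` is `‖a‖²`, because distinct coordinates are
uncorrelated. Averaging `‖ĝ‖² = μ⁻² Δ² d` over the cube gives the bound.
-/

open Finset
open scoped RealInnerProductSpace

section Smooth

variable {E : Type*} [NormedAddCommGroup E] [InnerProductSpace ℝ E] [CompleteSpace E]

theorem abs_sub_sub_inner_gradient_le {f : E → ℝ} {L : ℝ} (hf : Differentiable ℝ f)
    (hL : ∀ x y, ‖gradient f x - gradient f y‖ ≤ L * ‖x - y‖) (x h : E) :
    |f (x + h) - f x - ⟪gradient f x, h⟫| ≤ L / 2 * ‖h‖ ^ 2 := by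
  set φ : ℝ → ℝ := fun t => f (x + t • h) - f x - t * ⟪gradient f x, h⟫
  have hφ : ∀ t, HasDerivAt φ ⟪gradient f (x + t • h) - gradient f x, h⟫ t := by
    intro t
    have hline : HasDerivAt (fun t : ℝ => x + t • h) h t := by
      simpa using ((hasDerivAt_id t).smul_const h).const_add x
    have hcomp := (hf _).hasGradientAt.hasFDerivAt.comp_hasDerivAt t hline
    rw [inner_sub_left]
    exact ((hcomp.sub_const (f x)).sub ((hasDerivAt_id t).mul_const _)).congr_deriv (by simp)
  have hB : ∀ t, HasDerivAt (fun t => L / 2 * ‖h‖ ^ 2 * t ^ 2) (L * ‖h‖ ^ 2 * t) t := fun t => by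
    simpa using ((hasDerivAt_pow 2 t).const_mul (L / 2 * ‖h‖ ^ 2)).congr_deriv (by ring)
  have hbound : ∀ t ∈ Set.Ico (0 : ℝ) 1,
      ‖⟪gradient f (x + t • h) - gradient f x, h⟫‖ ≤ L * ‖h‖ ^ 2 * t := fun t ht =>
    calc ‖⟪gradient f (x + t • h) - gradient f x, h⟫‖
        ≤ ‖gradient f (x + t • h) - gradient f x‖ * ‖h‖ := norm_inner_le_norm _ _
      _ ≤ L * ‖(x + t • h) - x‖ * ‖h‖ := by gcongr; exact hL _ _
      _ = L * ‖h‖ ^ 2 * t := by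
        rw [add_sub_cancel_left, norm_smul, Real.norm_of_nonneg ht.1]; ring
  -- fencing: `|φ'|` is dominated by the derivative of `L / 2 * ‖h‖ ^ 2 * t ^ 2`, both vanish at `0`
  simpa [φ] using image_norm_le_of_norm_deriv_right_le_deriv_boundary
    (fun t _ => (hφ t).continuousAt.continuousWithinAt) (fun t _ => (hφ t).hasDerivWithinAt)
    (by simp [φ]) hB hbound (Set.right_mem_Icc.2 zero_le_one)

theorem norm_sq_two_point_estimator_le {f : E → ℝ} {L : ℝ} (hf : Differentiable ℝ f)
    (hL : ∀ x y, ‖gradient f x - gradient f y‖ ≤ L * ‖x - y‖) (μ : ℝ) (x v : E) :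
    ‖(μ⁻¹ * (f (x + μ • v) - f x)) • v‖ ^ 2 ≤
      2 * ‖v‖ ^ 2 * ⟪gradient f x, v⟫ ^ 2 + μ ^ 2 * L ^ 2 * ‖v‖ ^ 6 / 2 := by
  rcases eq_or_ne μ 0 with rfl | hμ
  · simp [mul_nonneg, sq_nonneg]
  have herr := abs_sub_sub_inner_gradient_le hf hL x (μ • v)
  rw [inner_smul_right, norm_smul, mul_pow, Real.norm_eq_abs, sq_abs] at herr
  set Δ := f (x + μ • v) - f x
  set c := ⟪gradient f x, v⟫
  have hΔ : Δ ^ 2 ≤ 2 * (μ * c) ^ 2 + 2 * (L / 2 * (μ ^ 2 * ‖v‖ ^ 2)) ^ 2 := by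
    have := sq_le_sq' (abs_le.1 herr).1 (abs_le.1 herr).2
    nlinarith [sq_nonneg (Δ - 2 * (μ * c))]
  calc ‖(μ⁻¹ * Δ) • v‖ ^ 2 = μ⁻¹ ^ 2 * Δ ^ 2 * ‖v‖ ^ 2 := by
        rw [norm_smul, Real.norm_eq_abs, mul_pow, sq_abs, mul_pow]
    _ ≤ μ⁻¹ ^ 2 * (2 * (μ * c) ^ 2 + 2 * (L / 2 * (μ ^ 2 * ‖v‖ ^ 2)) ^ 2) * ‖v‖ ^ 2 := by
        gcongr
    _ = 2 * ‖v‖ ^ 2 * c ^ 2 + μ ^ 2 * L ^ 2 * ‖v‖ ^ 6 / 2 := by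
        field_simp

end Smooth

section Rademacher

variable {ι : Type*} [Fintype ι]

theorem sum_sign_mul_sign [DecidableEq ι] (i j : ι) :
    ∑ s : ι → Bool, (if s i then (1 : ℝ) else -1) * (if s j then 1 else -1) =
      if i = j then 2 ^ Fintype.card ι else 0 := by
  split_ifs with hij
  · subst hij
    have hsq : ∀ b : Bool, (if b then (1 : ℝ) else -1) * (if b then 1 else -1) = 1 := by
      rintro ⟨⟩ <;> norm_num
    simp [hsq]
  · -- flipping the `i`-th sign is a bijection of the cube that negates every summand
    have hflip : Function.Involutive fun s : ι → Bool => Function.update s i (!s i) := fun s => by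
      simp
    have hneg := Equiv.sum_comp (hflip.toPerm _) fun s : ι → Bool =>
      (if s i then (1 : ℝ) else -1) * (if s j then 1 else -1)
    have hflip_neg : ∀ b c : Bool, (if (!b) then (1 : ℝ) else -1) * (if c then 1 else -1) =
        -((if b then 1 else -1) * (if c then 1 else -1)) := by
      rintro ⟨⟩ ⟨⟩ <;> norm_num
    simp only [Function.Involutive.coe_toPerm, Function.update_self,
      Function.update_of_ne (Ne.symm hij), hflip_neg, sum_neg_distrib] at hneg
    linarith

theorem sum_inner_sq_eq_of_sign_coords [DecidableEq ι] {u : (ι → Bool) → EuclideanSpace ℝ ι}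
    (hu : ∀ s i, u s i = if s i then 1 else -1) (a : EuclideanSpace ℝ ι) :
    ∑ s, ⟪a, u s⟫ ^ 2 = 2 ^ Fintype.card ι * ‖a‖ ^ 2 := by
  have hinner : ∀ s, ⟪a, u s⟫ = ∑ i, a i * if s i then 1 else -1 := fun s => by
    simp only [PiLp.inner_apply, hu, RCLike.inner_apply, conj_trivial, mul_comm]
  calc ∑ s, ⟪a, u s⟫ ^ 2
      = ∑ i, ∑ j, a i * a j *
          ∑ s : ι → Bool, (if s i then (1 : ℝ) else -1) * (if s j then 1 else -1) := by
        simp_rw [hinner, sq, sum_mul_sum, mul_sum]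
        rw [sum_comm]
        refine sum_congr rfl fun i _ => ?_
        rw [sum_comm]
        exact sum_congr rfl fun j _ => sum_congr rfl fun s _ => by ring
    _ = 2 ^ Fintype.card ι * ‖a‖ ^ 2 := by
        simp_rw [sum_sign_mul_sign, mul_ite, mul_zero, Fintype.sum_ite_eq]
        rw [EuclideanSpace.norm_sq_eq, mul_sum]
        exact sum_congr rfl fun i _ => by simp only [Real.norm_eq_abs, sq_abs]; ring

theorem norm_sq_eq_card_of_sign_coords {v : EuclideanSpace ℝ ι} {b : ι → Bool}
    (hv : ∀ i, v i = if b i then 1 else -1) : ‖v‖ ^ 2 = Fintype.card ι := by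
  simp [EuclideanSpace.norm_sq_eq, hv, apply_ite]

end Rademacher

theorem zo_estimator_second_moment_general (d : ℕ) (f : EuclideanSpace ℝ (Fin d) → ℝ)
    (L : ℝ) (hf : Differentiable ℝ f)
    (hL : ∀ x y, ‖gradient f x - gradient f y‖ ≤ L * ‖x - y‖)
    (μ : ℝ) (x : EuclideanSpace ℝ (Fin d))
    (u : (Fin d → Bool) → EuclideanSpace ℝ (Fin d))
    (hu : ∀ s i, u s i = if s i then 1 else -1)
    (g : (Fin d → Bool) → EuclideanSpace ℝ (Fin d))
    (hg : ∀ s, g s = (μ⁻¹ * (f (x + μ • u s) - f x)) • u s) :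
    ((2 : ℝ) ^ d)⁻¹ * (∑ s : Fin d → Bool, ‖g s‖ ^ 2) ≤
      2 * d * ‖gradient f x‖ ^ 2 + μ ^ 2 * L ^ 2 * (d : ℝ) ^ 3 / 2 := by
  have hnorm : ∀ s, ‖u s‖ ^ 2 = d := fun s => by
    simpa using norm_sq_eq_card_of_sign_coords (hu s)
  have hpoint : ∀ s, ‖g s‖ ^ 2 ≤
      2 * d * ⟪gradient f x, u s⟫ ^ 2 + μ ^ 2 * L ^ 2 * (d : ℝ) ^ 3 / 2 := fun s => by
    have := norm_sq_two_point_estimator_le hf hL μ x (u s)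
    rwa [← hg s, show ‖u s‖ ^ 6 = (‖u s‖ ^ 2) ^ 3 by ring, hnorm] at this
  rw [inv_mul_le_iff₀ (by positivity)]
  calc ∑ s, ‖g s‖ ^ 2
      ≤ ∑ s, (2 * d * ⟪gradient f x, u s⟫ ^ 2 + μ ^ 2 * L ^ 2 * (d : ℝ) ^ 3 / 2) :=
        sum_le_sum fun s _ => hpoint s
    _ = 2 * d * ∑ s, ⟪gradient f x, u s⟫ ^ 2 + 2 ^ d * (μ ^ 2 * L ^ 2 * (d : ℝ) ^ 3 / 2) := by
        simp [sum_add_distrib, mul_sum]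
    _ = 2 ^ d * (2 * d * ‖gradient f x‖ ^ 2 + μ ^ 2 * L ^ 2 * (d : ℝ) ^ 3 / 2) := by
        rw [sum_inner_sq_eq_of_sign_coords hu, Fintype.card_fin]
        ring

/-- Second-moment bound for the two-point Rademacher zeroth-order estimator:
`E_u[‖ĝ‖²] ≤ 2d‖∇f(x)‖² + μ²L²d³/2`. -/
theorem zo_estimator_second_moment (d : ℕ) (f : EuclideanSpace ℝ (Fin d) → ℝ)
    (L : ℝ) (hf : Differentiable ℝ f)
    (hL : ∀ x y, ‖gradient f x - gradient f y‖ ≤ L * ‖x - y‖)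
    (μ : ℝ) (hμ : 0 < μ) (x : EuclideanSpace ℝ (Fin d))
    (u : (Fin d → Bool) → EuclideanSpace ℝ (Fin d))
    (hu : ∀ s i, u s i = if s i then 1 else -1)
    (g : (Fin d → Bool) → EuclideanSpace ℝ (Fin d))
    (hg : ∀ s, g s = (μ⁻¹ * (f (x + μ • u s) - f x)) • u s) :
    ((2 : ℝ) ^ d)⁻¹ * (∑ s : Fin d → Bool, ‖g s‖ ^ 2) ≤
      2 * d * ‖gradient f x‖ ^ 2 + μ ^ 2 * L ^ 2 * (d : ℝ) ^ 3 / 2 :=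
  zo_estimator_second_moment_general d f L hf hL μ x u hu g hg
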